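/- Let ρ_i > 0, and suppose λ_i^k - λ_i^{k-1} = ρ_i(z^k - x_i^k) for all i in a finite set M with Σ_i λ_i^k = 0 = Σ_i λ_i^{k-1}. If all ρ_i are equal to a common ρ and z^k = (1/|M|)Σ_i x_i^k, then Σ_i ‖z^{k-1} - x_i^k‖² = Σ_i ‖z^k - z^{k-1}‖² + (1/ρ²)Σ_i ‖λ_i^k - λ_i^{k-1}‖². -/

import Mathlib

/-!
Summing the price updates over zero-sum prices shows that the deviations `z^k - x_i^k` sum to
zero, so when `‖z^{k-1} - x_i^k‖²` is expanded around `z^k` the cross terms cancel, and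
`‖λ_i^k - λ_i^{k-1}‖² = ρ² ‖z^k - x_i^k‖²`.
-/

open Finset

theorem sum_norm_add_sq_of_sum_eq_zero {ι E : Type*} [NormedAddCommGroup E]
    [InnerProductSpace ℝ E] (s : Finset ι) (w : E) (v : ι → E) (hv : ∑ i ∈ s, v i = 0) :
    ∑ i ∈ s, ‖w + v i‖ ^ 2 = ∑ _i ∈ s, ‖w‖ ^ 2 + ∑ i ∈ s, ‖v i‖ ^ 2 := by
  have hcross : ∑ i ∈ s, inner ℝ w (v i) = 0 := by
    rw [← inner_sum, hv, inner_zero_right]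
  simp only [norm_add_sq_real, sum_add_distrib, ← mul_sum, hcross, mul_zero, add_zero]

theorem stmt_16_general {ι : Type*} [Fintype ι] (n : ℕ)
    (ρ : ℝ) (hρ : 0 < ρ)
    (x lamk lamk1 : ι → EuclideanSpace ℝ (Fin n)) (zk zk1 : EuclideanSpace ℝ (Fin n))
    (hupd : ∀ i, lamk i - lamk1 i = ρ • (zk - x i))
    (hsumk : ∑ i, lamk i = 0) (hsumk1 : ∑ i, lamk1 i = 0) :
    ∑ i, ‖zk1 - x i‖ ^ 2
      = ∑ _i : ι, ‖zk - zk1‖ ^ 2 + (1 / ρ ^ 2) * ∑ i, ‖lamk i - lamk1 i‖ ^ 2 := by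
  have hdev : ∑ i, (zk - x i) = 0 := by
    have h : ρ • ∑ i, (zk - x i) = 0 := by
      simp_rw [smul_sum, ← hupd]
      rw [sum_sub_distrib, hsumk, hsumk1, sub_zero]
    exact (smul_eq_zero.mp h).resolve_left hρ.ne'
  have hprice : ∀ i, ‖lamk i - lamk1 i‖ ^ 2 = ρ ^ 2 * ‖zk - x i‖ ^ 2 := fun i => by
    rw [hupd i, norm_smul, mul_pow, Real.norm_eq_abs, sq_abs]
  have hsplit : ∀ i, zk1 - x i = (zk1 - zk) + (zk - x i) := fun i => by abel
  simp only [hsplit, hprice, ← mul_sum]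
  rw [sum_norm_add_sq_of_sum_eq_zero _ _ _ hdev, norm_sub_rev, one_div,
    inv_mul_cancel_left₀ (pow_ne_zero 2 hρ.ne')]

theorem stmt_16 {ι : Type*} [Fintype ι] [Nonempty ι] (n : ℕ)
    (ρ : ℝ) (hρ : 0 < ρ)
    (x lamk lamk1 : ι → EuclideanSpace ℝ (Fin n)) (zk zk1 : EuclideanSpace ℝ (Fin n))
    (hupd : ∀ i, lamk i - lamk1 i = ρ • (zk - x i))
    (hsumk : ∑ i, lamk i = 0) (hsumk1 : ∑ i, lamk1 i = 0)
    (hz : zk = (1 / (Fintype.card ι : ℝ)) • (∑ i : ι, x i)) :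
    ∑ i, ‖zk1 - x i‖ ^ 2
      = ∑ _i : ι, ‖zk - zk1‖ ^ 2 + (1 / ρ ^ 2) * ∑ i, ‖lamk i - lamk1 i‖ ^ 2 :=
  stmt_16_general n ρ hρ x lamk lamk1 zk zk1 hupd hsumk hsumk1
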